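/- arXiv:2107.05018 — 6 statements merged into one kernel-verified Lean document; each statement's English description precedes it below -/
import Mathlib

section
/- Tiebreak Lemma: Let M_1,…,M_k be skeletal matrices of size p × ℕ over ℚ and let H be an m × p tie matrix. Then there exists a finitely supported rational stochastic vector v (indexed by ℕ) with first entry v_1 > 0 such that H(M_j v) is a tieless vector for every j ∈ [k]. -/
/-- A vector is tieless if any two distinct coordinates with the first nonzero differ. -/
def Tieless {ι α : Type*} [Zero α] (w : ι → α) : Prop :=
  ∀ i i', i ≠ i' → w i ≠ 0 → w i ≠ w i'

/-- A `p × ℕ` rational matrix is skeletal if each row is zero or some column is the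
corresponding standard unit vector. -/
def Skeletal {p : ℕ} (M : Matrix (Fin p) ℕ ℚ) : Prop :=
  ∀ j : Fin p, (∀ i : ℕ, M j i = 0) ∨
    (∃ i : ℕ, ∀ r : Fin p, M r i = if r = j then 1 else 0)

noncomputable def linQ (f : ℕ → ℚ) : (ℕ →₀ ℚ) →ₗ[ℚ] ℚ :=
  Finsupp.lsum ℚ (fun c => f c • LinearMap.id)

lemma linQ_apply (f : ℕ → ℚ) (v : ℕ →₀ ℚ) : linQ f v = v.sum fun c x => f c * x := by
  simp [linQ, Finsupp.lsum_apply, Finsupp.sum, smul_eq_mul]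

lemma linQ_single (f : ℕ → ℚ) (c : ℕ) : linQ f (Finsupp.single c 1) = f c := by
  rw [linQ_apply, Finsupp.sum_single_index] <;> simp

lemma linQ_sub (f g : ℕ → ℚ) (v : ℕ →₀ ℚ) :
    linQ (fun c => f c - g c) v = linQ f v - linQ g v := by
  simp only [linQ_apply, sub_mul]
  exact Finsupp.sum_sub

def Feas (v : ℕ →₀ ℚ) : Prop :=
  (∀ i, 0 ≤ v i) ∧ (v.sum fun _ c => c) = 1 ∧ 0 < v 0

lemma sum_eq_linQ_one (v : ℕ →₀ ℚ) : (v.sum fun _ c => c) = linQ (fun _ => 1) v := by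
  simp [linQ_apply]

lemma feas_single0 : Feas (Finsupp.single 0 1) := by
  refine ⟨fun i => ?_, ?_, ?_⟩
  · rw [Finsupp.single_apply]; split <;> norm_num
  · rw [Finsupp.sum_single_index] ; rfl
  · simp

lemma feas_comb {a b : ℕ →₀ ℚ} (ha : Feas a) (hb0 : ∀ i, 0 ≤ b i)
    (hb1 : (b.sum fun _ c => c) = 1) {t : ℚ} (h0 : 0 ≤ t) (h1 : t < 1) :
    Feas ((1 - t) • a + t • b) := by
  refine ⟨fun i => ?_, ?_, ?_⟩
  · have := ha.1 i
    have := hb0 i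
    simp only [Finsupp.add_apply, Finsupp.smul_apply, smul_eq_mul]
    nlinarith
  · rw [sum_eq_linQ_one, map_add, map_smul, map_smul, ← sum_eq_linQ_one, ← sum_eq_linQ_one,
      ha.2.1, hb1]
    simp
  · have h2 := ha.2.2
    have h3 := hb0 0
    simp only [Finsupp.add_apply, Finsupp.smul_apply, smul_eq_mul]
    nlinarith

lemma avoid {T : Type*} [DecidableEq T] (S : Finset T) (L : T → ((ℕ →₀ ℚ) →ₗ[ℚ] ℚ))
    (h : ∀ t ∈ S, ∃ v, Feas v ∧ L t v ≠ 0) :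
    ∃ v, Feas v ∧ ∀ t ∈ S, L t v ≠ 0 := by
  classical
  induction S using Finset.induction_on with
  | empty => exact ⟨Finsupp.single 0 1, feas_single0, by simp⟩
  | insert t₀ S hnew ih =>
    obtain ⟨a, ha, hA⟩ := ih (fun t ht => h t (Finset.mem_insert_of_mem ht))
    obtain ⟨b, hb, hB⟩ := h t₀ (Finset.mem_insert_self _ _)
    set ρ : T → ℚ := fun s => (L s a) / (L s a - L s b) with hρ
    set F : Finset ℚ := (insert t₀ S).image ρ with hF
    have hinj : Function.Injective (fun n : ℕ => (1 : ℚ) / (n + 2)) := by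
      intro u w huv
      simp only [one_div] at huv
      have h2 : (u : ℚ) + 2 = (w : ℚ) + 2 := inv_injective huv
      have : (u : ℚ) = w := by linarith
      exact_mod_cast this
    obtain ⟨x, hx, hxF⟩ :=
      (Set.infinite_range_of_injective hinj).exists_notMem_finset F
    obtain ⟨n, rfl⟩ := hx
    set t : ℚ := (1 : ℚ) / (n + 2) with htdef
    have ht0 : 0 ≤ t := by positivity
    have ht1 : t < 1 := by
      rw [htdef, div_lt_one (by positivity)]
      have : (0:ℚ) ≤ n := Nat.cast_nonneg n
      linarith
    refine ⟨(1 - t) • a + t • b, feas_comb ha hb.1 hb.2.1 ht0 ht1, ?_⟩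
    intro s hs
    have hLv : L s ((1 - t) • a + t • b) = (1 - t) * L s a + t * L s b := by
      rw [map_add, map_smul, map_smul] ; simp
    rw [hLv]
    by_cases hab : L s a = L s b
    · rw [← hab]
      have : (1 - t) * L s a + t * L s a = L s a := by ring
      rw [this]
      rcases Finset.mem_insert.1 hs with rfl | hsS
      · rw [hab]; exact hB
      · exact hA s hsS
    · intro hzero
      apply hxF
      rw [hF, Finset.mem_image]
      refine ⟨s, hs, ?_⟩
      have hd : L s a - L s b ≠ 0 := sub_ne_zero.2 hab
      have hts : t * (L s a - L s b) = L s a := by linear_combination -hzero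
      show ρ s = t
      rw [hρ]
      exact (div_eq_iff hd).2 hts.symm

/-- Tiebreak Lemma. -/
theorem stmt1 {k p m : ℕ} (M : Fin k → Matrix (Fin p) ℕ ℚ)
    (hM : ∀ j, Skeletal (M j))
    (H : Matrix (Fin m) (Fin p) ℚ)
    (hHnat : ∀ i j, ∃ z : ℕ, H i j = z)
    (hHcol : ∀ j : Fin p, Tieless (fun i => H i j)) :
    ∃ v : ℕ →₀ ℚ, (∀ i, 0 ≤ v i) ∧ (v.sum fun _ c => c) = 1 ∧ 0 < v 0 ∧
      ∀ j : Fin k,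
        Tieless (H.mulVec fun r => v.sum fun i c => M j r i * c) := by
  classical
  set coef : Fin k → Fin m → ℕ → ℚ := fun j i c => ∑ r, H i r * M j r c with hcoef
  have key : ∀ (j : Fin k) (v : ℕ →₀ ℚ) (i : Fin m),
      H.mulVec (fun r => v.sum fun c x => M j r c * x) i = linQ (coef j i) v := by
    intro j v i
    rw [linQ_apply]
    simp only [Matrix.mulVec, dotProduct, Finsupp.sum, hcoef, Finset.mul_sum,
      Finset.sum_mul]
    rw [Finset.sum_comm]
    apply Finset.sum_congr rfl
    intro c _
    apply Finset.sum_congr rfl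
    intro r _
    ring
  -- degenerate case
  have deg : ∀ (j : Fin k) (i i' : Fin m), i ≠ i' →
      (∀ v, Feas v → linQ (coef j i) v = linQ (coef j i') v) →
      ∀ v, linQ (coef j i) v = 0 := by
    intro j i i' hii hdeg v
    have hce : ∀ c, coef j i c = coef j i' c := by
      intro c
      have h0 := hdeg (Finsupp.single 0 1) feas_single0
      have hsc : ∀ i, 0 ≤ (Finsupp.single c (1:ℚ)) i := by
        intro i
        rw [Finsupp.single_apply]; split <;> norm_num
      have hss : ((Finsupp.single c (1:ℚ)).sum fun _ x => x) = 1 := by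
        rw [Finsupp.sum_single_index] ; rfl
      have hm := hdeg _ (feas_comb feas_single0 hsc hss (by norm_num : (0:ℚ) ≤ 1/2)
        (by norm_num : (1:ℚ)/2 < 1))
      rw [map_add, map_smul, map_smul, map_add, map_smul, map_smul] at hm
      simp only [smul_eq_mul, linQ_single] at hm h0
      rw [h0] at hm
      have : coef j i c = coef j i' c := by linarith
      exact this
    have hrow : ∀ r, H i r = 0 ∨ ∀ c, M j r c = 0 := by
      intro r
      rcases hM j r with hz | ⟨cw, hw⟩
      · exact Or.inr hz
      · left
        have h1 : coef j i cw = H i r := by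
          simp [hcoef, hw, mul_ite, mul_one, mul_zero]
        have h2 : coef j i' cw = H i' r := by
          simp [hcoef, hw, mul_ite, mul_one, mul_zero]
        by_contra hne
        exact hHcol r i i' hii hne (by show H i r = H i' r; rw [← h1, ← h2, hce cw])
    have hc0 : ∀ c, coef j i c = 0 := by
      intro c
      apply Finset.sum_eq_zero
      intro r _
      rcases hrow r with h | h
      · rw [h, zero_mul]
      · rw [h c, mul_zero]
    rw [linQ_apply, Finsupp.sum]
    exact Finset.sum_eq_zero fun c _ => by rw [hc0, zero_mul]
  set S : Finset (Fin k × Fin m × Fin m) :=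
    Finset.univ.filter
      (fun t => ∃ v, Feas v ∧
        linQ (fun c => coef t.1 t.2.1 c - coef t.1 t.2.2 c) v ≠ 0) with hS
  obtain ⟨v, hv, hvS⟩ := avoid S
      (fun t => linQ (fun c => coef t.1 t.2.1 c - coef t.1 t.2.2 c))
      (fun t ht => (Finset.mem_filter.1 ht).2)
  refine ⟨v, hv.1, hv.2.1, hv.2.2, ?_⟩
  intro j i i' hii hiz
  rw [show (H.mulVec fun r => v.sum fun c x => M j r c * x) i = linQ (coef j i) v from
    key j v i] at hiz ⊢
  rw [show (H.mulVec fun r => v.sum fun c x => M j r c * x) i' = linQ (coef j i') v from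
    key j v i']
  by_cases hmem : (j, i, i') ∈ S
  · have hne := hvS _ hmem
    rw [linQ_sub] at hne
    intro heq
    exact hne (by rw [heq, sub_self])
  · exfalso
    apply hiz
    apply deg j i i' hii
    intro w hw
    rw [hS, Finset.mem_filter] at hmem
    push_neg at hmem
    have := hmem (Finset.mem_univ _) w hw
    have h2 : linQ (coef j i) w - linQ (coef j i') w = 0 := by
      rw [← linQ_sub]; exact this
    linarith
end

section
/- The set 𝒞, whose L-ary part 𝒞^(L) consists of pairs (M, μ) with M ∈ ℚ^{L×ℕ} entrywise nonnegative with all column sums equal to 1, μ ∈ ℤ^L with entries summing to 1, supp(μ) ⊆ supp(M e_1), M eventually column-constant (∃ t, M e_i = M e_t for all i ≥ t), and M skeletal, is closed under the minor operations (M, μ)_{/π} := (P_π M, P_π μ) for π : [L] → [L']; i.e., (M, μ) ∈ 𝒞^(L) implies (P_π M, P_π μ) ∈ 𝒞^(L'). -/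
/-- The 0-1 matrix associated with a map `π : [L] → [L']`. -/
def Pmat (α : Type*) [Zero α] [One α] {L L' : ℕ} (π : Fin L → Fin L') :
    Matrix (Fin L') (Fin L) α :=
  Matrix.of fun i j => if π j = i then 1 else 0

/-- Membership in the `L`-ary part of the CLAP minion `𝒞`. -/
def MemC {L : ℕ} (M : Matrix (Fin L) ℕ ℚ) (μ : Fin L → ℤ) : Prop :=
  (∀ i j, 0 ≤ M i j) ∧
  (∀ j : ℕ, ∑ i, M i j = 1) ∧
  (∑ i, μ i = 1) ∧
  (∀ i, μ i ≠ 0 → M i 0 ≠ 0) ∧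
  (∃ t : ℕ, ∀ i, t ≤ i → ∀ r, M r i = M r t) ∧
  Skeletal M

lemma Pmat_mul_apply {L L' : ℕ} (π : Fin L → Fin L') (M : Matrix (Fin L) ℕ ℚ)
    (i : Fin L') (j : ℕ) :
    (Pmat ℚ π * M) i j = ∑ k, if π k = i then M k j else 0 := by
  simp [Matrix.mul_apply, Pmat, ite_mul]

lemma Pmat_mulVec_apply {L L' : ℕ} (π : Fin L → Fin L') (μ : Fin L → ℤ)
    (i : Fin L') :
    (Pmat ℤ π).mulVec μ i = ∑ k, if π k = i then μ k else 0 := by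
  simp [Matrix.mulVec, dotProduct, Pmat, ite_mul]

/-- `𝒞` is closed under the minor operations `(M, μ)ₚᵢ := (P_π M, P_π μ)`. -/
theorem stmt4 {L L' : ℕ} (M : Matrix (Fin L) ℕ ℚ) (μ : Fin L → ℤ)
    (h : MemC M μ) (π : Fin L → Fin L') :
    MemC (Pmat ℚ π * M) ((Pmat ℤ π).mulVec μ) := by
  obtain ⟨hnn, hcol, hsum, hsupp, ⟨t, ht⟩, hsk⟩ := h
  refine ⟨?_, ?_, ?_, ?_, ⟨t, ?_⟩, ?_⟩
  · intro i j
    rw [Pmat_mul_apply]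
    refine Finset.sum_nonneg fun k _ => ?_
    split
    · exact hnn k j
    · exact le_refl 0
  · intro j
    simp only [Pmat_mul_apply]
    rw [Finset.sum_comm]
    calc ∑ k, ∑ i, (if π k = i then M k j else 0)
        = ∑ k, M k j := by
          refine Finset.sum_congr rfl fun k _ => ?_
          simp
      _ = 1 := hcol j
  · simp only [Pmat_mulVec_apply]
    rw [Finset.sum_comm]
    calc ∑ k, ∑ i, (if π k = i then μ k else 0)
        = ∑ k, μ k := by
          refine Finset.sum_congr rfl fun k _ => ?_
          simp
      _ = 1 := hsum
  · intro i hi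
    rw [Pmat_mulVec_apply] at hi
    obtain ⟨k, -, hk⟩ := Finset.exists_ne_zero_of_sum_ne_zero hi
    have hπk : π k = i := by by_contra hc; simp [hc] at hk
    have hk' : μ k ≠ 0 := by by_contra hc; simp [hc] at hk
    have hM := hsupp k hk'
    rw [Pmat_mul_apply]
    have hpos : 0 < M k 0 := lt_of_le_of_ne (hnn k 0) (Ne.symm hM)
    have : 0 < ∑ l, if π l = i then M l 0 else 0 := by
      refine Finset.sum_pos' (fun l _ => ?_) ⟨k, Finset.mem_univ k, by simp [hπk, hpos]⟩
      split <;> [exact hnn l 0; exact le_refl 0]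
    exact ne_of_gt this
  · intro i hi r
    simp only [Pmat_mul_apply]
    exact Finset.sum_congr rfl fun k _ => by rw [ht i hi k]
  · intro j
    by_cases hz : ∀ k, π k = j → ∀ i, M k i = 0
    · left
      intro i
      rw [Pmat_mul_apply]
      refine Finset.sum_eq_zero fun k _ => ?_
      split_ifs with hk
      · exact hz k hk i
      · rfl
    · right
      push_neg at hz
      obtain ⟨k, hπk, i0, hki0⟩ := hz
      rcases hsk k with hzero | ⟨i, hi⟩
      · exact absurd (hzero i0) hki0
      refine ⟨i, fun r => ?_⟩
      rw [Pmat_mul_apply]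
      by_cases hr : r = j
      · subst hr
        simp only [if_pos rfl]
        rw [Finset.sum_eq_single k]
        · simp [hπk, hi k]
        · intro l _ hl
          rcases eq_or_ne (π l) (π k) with h1 | h1
          · simp [h1, hπk, hi l, hl]
          · simp [hπk] at h1 ⊢
            intro hc; exact absurd hc h1
        · simp
      · simp only [if_neg hr]
        refine Finset.sum_eq_zero fun l _ => ?_
        split_ifs with hl
        · rw [hi l]
          split_ifs with hlk
          · subst hlk; exact absurd (hπk ▸ hl.symm) hr
          · rfl
        · rfl
end

section
/- Compactness for 𝒞: Let ℳ be a minion such that ℳ^(L) is finite for each L ∈ ℕ. If for each D ∈ ℕ there exists a minion homomorphism ξ_D : 𝒞_D → ℳ, then there exists a minion homomorphism ζ : 𝒞 → ℳ. -/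
/-- Membership in the sub-minion `𝒞_D`. -/
def MemCD (D : ℕ) {L : ℕ} (M : Matrix (Fin L) ℕ ℚ) (μ : Fin L → ℤ) : Prop :=
  MemC M μ ∧
  (∀ i j, ∃ z : ℤ, (D : ℚ) * M i j = (z : ℚ)) ∧
  (∀ i, D ≤ i → ∀ r, M r i = M r D) ∧
  ((∑ i, |μ i|) ≤ (D : ℤ))

/-- An abstract (ℕ-graded) minion. -/
structure NMinion where
  carrier : ℕ → Type
  map : ∀ {L L' : ℕ}, (Fin L → Fin L') → carrier L → carrier L'
  map_comp : ∀ {L L' L'' : ℕ} (π : Fin L → Fin L') (π' : Fin L' → Fin L'')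
    (x : carrier L), map π' (map π x) = map (π' ∘ π) x
  map_id : ∀ {L : ℕ} (x : carrier L), map id x = x

-- basic fact: den divides n → n * q is an integer
lemma den_dvd_int (q : ℚ) (n : ℕ) (h : q.den ∣ n) : ∃ z : ℤ, (n : ℚ) * q = (z : ℚ) := by
  obtain ⟨c, rfl⟩ := h
  refine ⟨(c : ℤ) * q.num, ?_⟩
  have hq : (q.den : ℚ) * q = (q.num : ℚ) := by
    rw [mul_comm]
    exact_mod_cast Rat.mul_den_eq_num q
  push_cast
  rw [mul_comm (q.den : ℚ) (c : ℚ), mul_assoc, hq]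

-- Lemma A
lemma memC_exists_D {L : ℕ} (M : Matrix (Fin L) ℕ ℚ) (μ : Fin L → ℤ) (h : MemC M μ) :
    ∃ D₀ : ℕ, 0 < D₀ ∧ ∀ D : ℕ, D₀ ∣ D → 0 < D → MemCD D M μ := by
  obtain ⟨hpos, hcol, hμ, hsupp, ⟨t, ht⟩, hskel⟩ := h
  set N : ℕ := ∏ p : Fin L, ∏ j ∈ Finset.range (t + 1), (M p j).den with hN
  have hNpos : 0 < N := by
    apply Finset.prod_pos; intro p _
    apply Finset.prod_pos; intro j _
    exact (M p j).pos
  refine ⟨N * (t + (∑ i, |μ i|).toNat + 1), by positivity, ?_⟩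
  intro D hdvd hD
  have hD₀le : N * (t + (∑ i, |μ i|).toNat + 1) ≤ D := Nat.le_of_dvd hD hdvd
  have htD : t ≤ D := le_trans (by nlinarith [hNpos]) hD₀le
  refine ⟨⟨hpos, hcol, hμ, hsupp, ⟨t, ht⟩, hskel⟩, ?_, ?_, ?_⟩
  · intro i j
    have key : M i j = M i (min j t) := by
      rcases le_or_gt j t with hj | hj
      · rw [min_eq_left hj]
      · rw [min_eq_right hj.le, ht j hj.le i, ht t le_rfl i]
    rw [key]
    apply den_dvd_int
    calc (M i (min j t)).den
        ∣ ∏ j ∈ Finset.range (t+1), (M i j).den :=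
          Finset.dvd_prod_of_mem _ (Finset.mem_range.mpr (by omega))
      _ ∣ N := Finset.dvd_prod_of_mem _ (Finset.mem_univ i)
      _ ∣ D := dvd_trans (Dvd.intro _ rfl) hdvd
  · intro i hi r
    rw [ht i (le_trans htD hi) r, ht D htD r]
  · have h1 : (∑ i, |μ i|) = ((∑ i, |μ i|).toNat : ℤ) := by
      rw [Int.toNat_of_nonneg (Finset.sum_nonneg fun i _ => abs_nonneg _)]
    rw [h1]
    exact_mod_cast le_trans (by nlinarith [hNpos]) hD₀le

-- Lemma B: 𝒞_D closed under minors
lemma memCD_minor {D L L' : ℕ} (π : Fin L → Fin L') (M : Matrix (Fin L) ℕ ℚ)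
    (μ : Fin L → ℤ) (h : MemCD D M μ) (h' : MemC (Pmat ℚ π * M) ((Pmat ℤ π).mulVec μ)) :
    MemCD D (Pmat ℚ π * M) ((Pmat ℤ π).mulVec μ) := by
  obtain ⟨hC, hint, hcst, hnorm⟩ := h
  refine ⟨h', ?_, ?_, ?_⟩
  · intro i j
    choose z hz using hint
    refine ⟨∑ k, if π k = i then z k j else 0, ?_⟩
    simp only [Matrix.mul_apply, Pmat, Matrix.of_apply, Finset.mul_sum]
    push_cast
    apply Finset.sum_congr rfl
    intro k _
    by_cases hk : π k = i <;> simp [hk, hz k j]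
  · intro i hi r
    simp only [Matrix.mul_apply, Pmat, Matrix.of_apply]
    apply Finset.sum_congr rfl
    intro k _
    rw [hcst i hi k]
  · calc (∑ i, |(Pmat ℤ π).mulVec μ i|)
        ≤ ∑ i, ∑ k, if π k = i then |μ k| else 0 := by
          apply Finset.sum_le_sum
          intro i _
          simp only [Matrix.mulVec, Pmat, Matrix.of_apply, dotProduct]
          refine le_trans (Finset.abs_sum_le_sum_abs _ _) ?_
          apply Finset.sum_le_sum
          intro k _
          by_cases hk : π k = i <;> simp [hk]
      _ = ∑ k : Fin L, |μ k| := by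
          rw [Finset.sum_comm]
          apply Finset.sum_congr rfl
          intro k _
          simp
      _ ≤ (D : ℤ) := hnorm

/-- Compactness: if each finite-carrier minion `ℳ` receives a minion homomorphism
from every `𝒞_D`, then it receives one from `𝒞`. -/
theorem stmt7 (Mm : NMinion) (hfin : ∀ L, Finite (Mm.carrier L))
    (hξ : ∀ D : ℕ, 0 < D →
      ∃ ξ : ∀ {L : ℕ} (M : Matrix (Fin L) ℕ ℚ) (μ : Fin L → ℤ),
        MemCD D M μ → Mm.carrier L,
      ∀ {L L' : ℕ} (π : Fin L → Fin L') (M : Matrix (Fin L) ℕ ℚ) (μ : Fin L → ℤ)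
        (h : MemCD D M μ) (h' : MemCD D (Pmat ℚ π * M) ((Pmat ℤ π).mulVec μ)),
        ξ (Pmat ℚ π * M) ((Pmat ℤ π).mulVec μ) h' = Mm.map π (ξ M μ h)) :
    ∃ ζ : ∀ {L : ℕ} (M : Matrix (Fin L) ℕ ℚ) (μ : Fin L → ℤ),
        MemC M μ → Mm.carrier L,
      ∀ {L L' : ℕ} (π : Fin L → Fin L') (M : Matrix (Fin L) ℕ ℚ) (μ : Fin L → ℤ)
        (h : MemC M μ) (h' : MemC (Pmat ℚ π * M) ((Pmat ℤ π).mulVec μ)),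
        ζ (Pmat ℚ π * M) ((Pmat ℤ π).mulVec μ) h' = Mm.map π (ζ M μ h) := by
  classical
  -- chosen homomorphisms
  set Ξ : ∀ (D : ℕ), 0 < D → ∀ {L : ℕ} (M : Matrix (Fin L) ℕ ℚ) (μ : Fin L → ℤ),
      MemCD D M μ → Mm.carrier L := fun D hD => (hξ D hD).choose with hΞdef
  have hΞ : ∀ (D : ℕ) (hD : 0 < D) {L L' : ℕ} (π : Fin L → Fin L')
      (M : Matrix (Fin L) ℕ ℚ) (μ : Fin L → ℤ)
      (h : MemCD D M μ) (h' : MemCD D (Pmat ℚ π * M) ((Pmat ℤ π).mulVec μ)),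
      Ξ D hD (Pmat ℚ π * M) ((Pmat ℤ π).mulVec μ) h' = Mm.map π (Ξ D hD M μ h) :=
    fun D hD => (hξ D hD).choose_spec
  -- the filter of sets of multiples
  set s : ℕ → Set ℕ := fun n => {D | 0 < D ∧ (n + 1) ∣ D} with hs
  set F : Filter ℕ := ⨅ n, Filter.principal (s n) with hF
  have hFne : F.NeBot := by
    apply Filter.iInf_neBot_of_directed'
    · intro n m
      refine ⟨(n + 1) * (m + 1) - 1, ?_, ?_⟩ <;>
      · show Filter.principal _ ≤ Filter.principal _
        apply Filter.principal_mono.mpr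
        intro D hD
        obtain ⟨hD1, hD2⟩ := hD
        have heq : (n + 1) * (m + 1) - 1 + 1 = (n + 1) * (m + 1) := by
          have : 0 < (n + 1) * (m + 1) := by positivity
          omega
        rw [heq] at hD2
        exact ⟨hD1, dvd_trans (by first | exact dvd_mul_right _ _ | exact dvd_mul_left _ _) hD2⟩
    · intro n
      rw [Filter.principal_neBot_iff]
      exact ⟨n + 1, Nat.succ_pos n, dvd_refl _⟩
  set U : Ultrafilter ℕ := Ultrafilter.of F with hU
  have hmem : ∀ n, s n ∈ U := by
    intro n
    exact (Ultrafilter.of_le F) (Filter.mem_iInf_of_mem n (Filter.mem_principal_self _))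
  -- the key existence claim
  have hP : ∀ (L : ℕ) (M : Matrix (Fin L) ℕ ℚ) (μ : Fin L → ℤ), MemC M μ →
      ∃ x : Mm.carrier L,
        {D | ∃ (hp : 0 < D) (hm : MemCD D M μ), Ξ D hp M μ hm = x} ∈ U := by
    intro L M μ h
    obtain ⟨D₀, hD₀, hA⟩ := memC_exists_D M μ h
    set f : ℕ → Option (Mm.carrier L) := fun D =>
      if hD : 0 < D ∧ MemCD D M μ then some (Ξ D hD.1 M μ hD.2) else none with hf
    haveI := hfin L
    haveI := Fintype.ofFinite (Mm.carrier L)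
    haveI : Finite (Option (Mm.carrier L)) := inferInstance
    obtain ⟨a, _, ha⟩ := Ultrafilter.eq_pure_of_finite_mem (Set.finite_univ)
      (Filter.univ_mem (f := (U.map f : Filter (Option (Mm.carrier L)))))
    have ha' : {D | f D = a} ∈ U := by
      have : {x | x = a} ∈ U.map f := by rw [ha]; simp
      exact this
    have hs0 : s (D₀ - 1) ∈ U := hmem (D₀ - 1)
    obtain ⟨D, hDa, hDs⟩ := Ultrafilter.nonempty_of_mem (Filter.inter_mem ha' hs0)
    have hDpos : 0 < D := hDs.1
    have hDmem : MemCD D M μ := by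
      apply hA D _ hDpos
      have : D₀ - 1 + 1 = D₀ := by omega
      rw [← this]; exact hDs.2
    have hfD : f D = some (Ξ D hDpos M μ hDmem) := by
      rw [hf]; simp only []
      rw [dif_pos ⟨hDpos, hDmem⟩]
    simp only [Set.mem_setOf_eq] at hDa
    rw [hfD] at hDa
    refine ⟨Ξ D hDpos M μ hDmem, ?_⟩
    have : {D' | f D' = a} ⊆ {D' | ∃ (hp : 0 < D') (hm : MemCD D' M μ),
        Ξ D' hp M μ hm = Ξ D hDpos M μ hDmem} := by
      intro D' hD'
      simp only [Set.mem_setOf_eq] at hD' ⊢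
      rw [hf] at hD'
      simp only [] at hD'
      by_cases hc : 0 < D' ∧ MemCD D' M μ
      · rw [dif_pos hc] at hD'
        refine ⟨hc.1, hc.2, ?_⟩
        rw [← hDa] at hD'
        exact Option.some_injective _ hD'
      · rw [dif_neg hc] at hD'
        rw [← hDa] at hD'
        exact absurd hD' (by simp)
    exact Filter.mem_of_superset ha' this
  -- define ζ
  choose ζ0 hζ0 using hP
  refine ⟨fun {L} M μ h => ζ0 L M μ h, ?_⟩
  intro L L' π M μ h h'
  show ζ0 L' (Pmat ℚ π * M) ((Pmat ℤ π).mulVec μ) h' = Mm.map π (ζ0 L M μ h)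
  have hx := hζ0 L M μ h
  have hy := hζ0 L' (Pmat ℚ π * M) ((Pmat ℤ π).mulVec μ) h'
  obtain ⟨D, hD1, hD2⟩ := Ultrafilter.nonempty_of_mem (Filter.inter_mem hy hx)
  obtain ⟨hp, hm', hval'⟩ := hD1
  obtain ⟨hp2, hm, hval⟩ := hD2
  rw [← hval', ← hval]
  exact hΞ D hp π M μ hm hm'
end

section
/- For a minion ℳ and a finite relational structure A, a map ξ : ℳ → Pol(A, B) defined by ξ(M)(a_1,…,a_L) = f(M_{/ρ}) — where f : 𝔽_ℳ(A) → B is a homomorphism from the free structure and ρ : [L] → A maps i to a_i — is a well-defined minion homomorphism. Conversely, if ξ : ℳ → Pol(A, B) is a minion homomorphism, then M ↦ ξ(M)(1,…,n) is a homomorphism from 𝔽_ℳ(A) to B. Hence there is a minion homomorphism from ℳ to Pol(A, B) if and only if 𝔽_ℳ(A) → B. -/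
/-- A relational structure over a signature `σ` with arity function `ar`. -/
structure Str (σ : Type*) (ar : σ → ℕ) (A : Type*) where
  rel : ∀ s : σ, Finset (Fin (ar s) → A)

/-- `f` is a polymorphism (of arity `I`) of the template `(SA, SB)`. -/
def IsPolymorphism {σ : Type*} {ar : σ → ℕ} {A B : Type*} (SA : Str σ ar A) (SB : Str σ ar B)
    {I : Type*} (f : (I → A) → B) : Prop :=
  ∀ (s : σ) (t : I → (Fin (ar s) → A)), (∀ i, t i ∈ SA.rel s) →
    (fun j => f (fun i => t i j)) ∈ SB.rel s

/-- An abstract minion, graded by finite index types. -/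
structure Minion where
  carrier : (I : Type) → [Fintype I] → Type
  map : {I J : Type} → [Fintype I] → [Fintype J] → (I → J) → carrier I → carrier J
  map_comp : ∀ {I J K : Type} [Fintype I] [Fintype J] [Fintype K]
    (π : I → J) (π' : J → K) (x : carrier I), map π' (map π x) = map (π' ∘ π) x
  map_id : ∀ {I : Type} [Fintype I] (x : carrier I), map id x = x

/-- There is a minion homomorphism from `ℳ` to `Pol(A, B)` iff the free structure
`𝔽_ℳ(A)` maps homomorphically to `B`. -/
theorem stmt9 {σ : Type} {ar : σ → ℕ} {A B : Type} [Fintype A] [DecidableEq A]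
    (SA : Str σ ar A) (SB : Str σ ar B) (Mm : Minion) :
    (∃ ξ : ∀ (I : Type) [Fintype I], Mm.carrier I → ((I → A) → B),
      (∀ (I : Type) [Fintype I] (M : Mm.carrier I), IsPolymorphism SA SB (ξ I M)) ∧
      (∀ (I J : Type) [Fintype I] [Fintype J] (π : I → J) (M : Mm.carrier I),
        ξ J (Mm.map π M) = fun a => ξ I M (a ∘ π))) ↔
    (∃ f : Mm.carrier A → B,
      ∀ (s : σ) (v : Fin (ar s) → Mm.carrier A),
        (∃ Q : Mm.carrier {x // x ∈ SA.rel s},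
          ∀ i, v i = Mm.map (fun t => t.1 i) Q) →
        (fun i => f (v i)) ∈ SB.rel s) := by
  constructor
  · rintro ⟨ξ, hpol, hmin⟩
    refine ⟨fun M => ξ A M id, ?_⟩
    rintro s v ⟨Q, hQ⟩
    have key : (fun i => ξ A (v i) id) =
        (fun j => ξ {x // x ∈ SA.rel s} Q (fun x => x.1 j)) := by
      funext i
      rw [hQ i, hmin]
      rfl
    rw [key]
    exact hpol _ Q s (fun x => x.1) (fun x => x.2)
  · rintro ⟨f, hf⟩
    refine ⟨fun I _ M a => f (Mm.map a M), ?_, ?_⟩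
    · intro I _ M s t ht
      apply hf
      refine ⟨Mm.map (fun i => (⟨t i, ht i⟩ : {x // x ∈ SA.rel s})) M, ?_⟩
      intro j
      rw [Mm.map_comp]
      rfl
    · intro I J _ _ π M
      funext a
      simp only [Mm.map_comp]
end

section
/- Let A = {0,…,6}, and define f : A^L → B = A as follows: if a ∈ {0,1}^L, then f(a) = 0 if the number of 1's is < L/3, f(a) = 1 if > L/3, and f(a) = a_1 if exactly L/3; if a ∈ {2,3,4,5,6}^L, then f(a) is the unique element of maximum multiplicity if it exists, else a_1; otherwise f(a) = 0. Then f is a polymorphism of the template (A, B) with relations R_1^A = {(0,0,1),(0,1,0),(1,0,0)}, R_1^B = {0,1}^3 ∖ {(0,0,0),(1,1,1)}, and R_2^A = R_2^B = {(2,3),(3,2),(4,5),(5,6),(6,4)}. -/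
/-- Number of occurrences of `x` in the tuple `a`. -/
def cnt {L : ℕ} (a : Fin L → Fin 7) (x : Fin 7) : ℕ :=
  (Finset.univ.filter fun i => a i = x).card

open scoped Classical in
/-- The polymorphism `f` from Example `ex:new2`. -/
noncomputable def fEx {L : ℕ} (a : Fin (L + 1) → Fin 7) : Fin 7 :=
  if ∀ i, a i = 0 ∨ a i = 1 then
    (if 3 * cnt a 1 < L + 1 then 0
     else if L + 1 < 3 * cnt a 1 then 1
     else a 0)
  else if ∀ i, a i ≠ 0 ∧ a i ≠ 1 then
    (if h : ∃ x : Fin 7, ∀ y : Fin 7, y ≠ x → cnt a y < cnt a x then h.choose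
     else a 0)
  else 0

/-- The binary relation `R₂ = {(2,3),(3,2),(4,5),(5,6),(6,4)}` on `{0,…,6}`. -/
def R2rel (p q : Fin 7) : Prop :=
  (p, q) = (2, 3) ∨ (p, q) = (3, 2) ∨ (p, q) = (4, 5) ∨ (p, q) = (5, 6) ∨
    (p, q) = (6, 4)

def piMap : Fin 7 → Fin 7 := ![1,0,3,2,5,6,4]
def piInv : Fin 7 → Fin 7 := ![1,0,3,2,6,4,5]

lemma piMap_inj : Function.Injective piMap := by decide
lemma piInv_inj : Function.Injective piInv := by decide
lemma piInv_piMap : ∀ v, piInv (piMap v) = v := by decide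
lemma piMap_piInv : ∀ v, piMap (piInv v) = v := by decide

lemma cnt_map {L : ℕ} (g : Fin 7 → Fin 7) (hg : Function.Injective g)
    (a : Fin L → Fin 7) (v : Fin 7) :
    cnt (fun i => g (a i)) (g v) = cnt a v := by
  unfold cnt
  congr 1
  ext i
  simp [hg.eq_iff]

/-- `fEx` is a polymorphism of the template `(A, B)` from Example `ex:new1`. -/
theorem stmt13 {L : ℕ} :
    (∀ x y z : Fin (L + 1) → Fin 7,
      (∀ i, (x i, y i, z i) = (0, 0, 1) ∨ (x i, y i, z i) = (0, 1, 0) ∨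
        (x i, y i, z i) = (1, 0, 0)) →
      ((fEx x = 0 ∨ fEx x = 1) ∧ (fEx y = 0 ∨ fEx y = 1) ∧
        (fEx z = 0 ∨ fEx z = 1) ∧ ¬(fEx x = fEx y ∧ fEx y = fEx z))) ∧
    (∀ x y : Fin (L + 1) → Fin 7,
      (∀ i, R2rel (x i) (y i)) → R2rel (fEx x) (fEx y)) := by
  constructor
  · intro x y z h
    have key : ∀ i, (x i = 0 ∧ y i = 0 ∧ z i = 1) ∨ (x i = 0 ∧ y i = 1 ∧ z i = 0) ∨
        (x i = 1 ∧ y i = 0 ∧ z i = 0) := by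
      intro i
      rcases h i with h' | h' | h' <;> simp [Prod.ext_iff] at h' <;> tauto
    have hbx : ∀ i, x i = 0 ∨ x i = 1 := by
      intro i; rcases key i with ⟨h1, _, _⟩ | ⟨h1, _, _⟩ | ⟨h1, _, _⟩ <;> tauto
    have hby : ∀ i, y i = 0 ∨ y i = 1 := by
      intro i; rcases key i with ⟨_, h1, _⟩ | ⟨_, h1, _⟩ | ⟨_, h1, _⟩ <;> tauto
    have hbz : ∀ i, z i = 0 ∨ z i = 1 := by
      intro i; rcases key i with ⟨_, _, h1⟩ | ⟨_, _, h1⟩ | ⟨_, _, h1⟩ <;> tauto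
    have hsum : cnt x 1 + cnt y 1 + cnt z 1 = L + 1 := by
      unfold cnt
      rw [Finset.card_filter, Finset.card_filter, Finset.card_filter,
        ← Finset.sum_add_distrib, ← Finset.sum_add_distrib]
      have e : ∀ i : Fin (L + 1), i ∈ Finset.univ →
          ((if x i = 1 then 1 else 0) + (if y i = 1 then 1 else 0))
            + (if z i = 1 then 1 else 0) = 1 := by
        intro i _
        rcases key i with ⟨h1, h2, h3⟩ | ⟨h1, h2, h3⟩ | ⟨h1, h2, h3⟩ <;>
          simp [h1, h2, h3]
      rw [Finset.sum_congr rfl e]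
      simp
    have fx : fEx x = if 3 * cnt x 1 < L + 1 then 0 else
        if L + 1 < 3 * cnt x 1 then 1 else x 0 := by
      unfold fEx; rw [if_pos hbx]
    have fy : fEx y = if 3 * cnt y 1 < L + 1 then 0 else
        if L + 1 < 3 * cnt y 1 then 1 else y 0 := by
      unfold fEx; rw [if_pos hby]
    have fz : fEx z = if 3 * cnt z 1 < L + 1 then 0 else
        if L + 1 < 3 * cnt z 1 then 1 else z 0 := by
      unfold fEx; rw [if_pos hbz]
    refine ⟨?_, ?_, ?_, ?_⟩
    · rw [fx]; split_ifs <;> simp [hbx 0]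
    · rw [fy]; split_ifs <;> simp [hby 0]
    · rw [fz]; split_ifs <;> simp [hbz 0]
    · rintro ⟨h1, h2⟩
      rw [fx, fy] at h1
      rw [fy, fz] at h2
      split_ifs at h1 h2 <;>
        first
          | omega
          | (rcases key 0 with ⟨a1, a2, a3⟩ | ⟨a1, a2, a3⟩ | ⟨a1, a2, a3⟩ <;> simp_all)
          | simp_all
  · intro x y h
    have hy : ∀ i, y i = piMap (x i) := by
      intro i
      rcases h i with h' | h' | h' | h' | h' <;>
        (simp [Prod.ext_iff] at h'; rw [h'.1, h'.2]; decide)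
    have hne : ∀ i, x i ≠ 0 ∧ x i ≠ 1 := by
      intro i
      rcases h i with h' | h' | h' | h' | h' <;>
        (simp [Prod.ext_iff] at h'; rw [h'.1]; decide)
    have hney : ∀ i, y i ≠ 0 ∧ y i ≠ 1 := by
      intro i
      rcases h i with h' | h' | h' | h' | h' <;>
        (simp [Prod.ext_iff] at h'; rw [h'.2]; decide)
    have hnbx : ¬ ∀ i, x i = 0 ∨ x i = 1 := by
      intro hb; rcases hb 0 with h0 | h0
      exacts [(hne 0).1 h0, (hne 0).2 h0]
    have hnby : ¬ ∀ i, y i = 0 ∨ y i = 1 := by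
      intro hb; rcases hb 0 with h0 | h0
      exacts [(hney 0).1 h0, (hney 0).2 h0]
    have cyx : ∀ v, cnt y (piMap v) = cnt x v := by
      intro v
      have e : y = fun i => piMap (x i) := funext hy
      rw [e]; exact cnt_map piMap piMap_inj x v
    by_cases hP : ∃ m : Fin 7, ∀ v : Fin 7, v ≠ m → cnt x v < cnt x m
    · have hm := hP.choose_spec
      set m := hP.choose with hmdef
      have fxv : fEx x = m := by
        unfold fEx; rw [if_neg hnbx, if_pos hne, dif_pos hP]
      have c0 : cnt x 0 = 0 := by
        unfold cnt
        rw [Finset.card_eq_zero, Finset.filter_eq_empty_iff]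
        intro i _; exact (hne i).1
      have c1 : cnt x 1 = 0 := by
        unfold cnt
        rw [Finset.card_eq_zero, Finset.filter_eq_empty_iff]
        intro i _; exact (hne i).2
      have hm0 : m ≠ 0 := by
        intro e
        have := hm 1 (by rw [e]; decide)
        rw [e] at this; omega
      have hm1 : m ≠ 1 := by
        intro e
        have := hm 0 (by rw [e]; decide)
        rw [e] at this; omega
      have hymax : ∀ v : Fin 7, v ≠ piMap m → cnt y v < cnt y (piMap m) := by
        intro v hv
        obtain ⟨w, rfl⟩ : ∃ w, piMap w = v := ⟨piInv v, piMap_piInv v⟩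
        rw [cyx, cyx]
        exact hm w (fun e => hv (by rw [e]))
      have hPy : ∃ m' : Fin 7, ∀ v : Fin 7, v ≠ m' → cnt y v < cnt y m' :=
        ⟨piMap m, hymax⟩
      have hych : hPy.choose = piMap m := by
        by_contra ne
        have h1 := hPy.choose_spec (piMap m) (fun e => ne e.symm)
        have h2 := hymax hPy.choose ne
        omega
      have fyv : fEx y = piMap m := by
        unfold fEx; rw [if_neg hnby, if_pos hney, dif_pos hPy, hych]
      rw [fxv, fyv]
      have hall : ∀ m : Fin 7, m ≠ 0 → m ≠ 1 → R2rel m (piMap m) := by unfold R2rel piMap; decide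
      exact hall m hm0 hm1
    · have hxy : ∀ i, x i = piInv (y i) := fun i => by rw [hy i, piInv_piMap]
      have cxv : ∀ v, cnt x (piInv v) = cnt y v := by
        intro v
        have e : x = fun i => piInv (y i) := funext hxy
        rw [e]; exact cnt_map piInv piInv_inj y v
      have hPy : ¬ ∃ m' : Fin 7, ∀ v : Fin 7, v ≠ m' → cnt y v < cnt y m' := by
        rintro ⟨m', hm'⟩
        apply hP
        refine ⟨piInv m', fun v hv => ?_⟩
        obtain ⟨w, rfl⟩ : ∃ w, piInv w = v := ⟨piMap v, piInv_piMap v⟩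
        rw [cxv, cxv]
        exact hm' w (fun e => hv (by rw [e]))
      have fxv : fEx x = x 0 := by
        unfold fEx; rw [if_neg hnbx, if_pos hne, dif_neg hP]
      have fyv : fEx y = y 0 := by
        unfold fEx; rw [if_neg hnby, if_pos hney, dif_neg hPy]
      rw [fxv, fyv]
      exact h 0
end

section
/- With f as defined in the previous statement and H = diag(1,2,1,1,1,1,1), the function f is H-symmetric: for every permutation σ of [L] and every a ∈ A^L whose multiplicity vector a^# satisfies that H a^# = (a^#_0, 2a^#_1, a^#_2, a^#_3, a^#_4, a^#_5, a^#_6) is tieless, f(a_{σ(1)},…,a_{σ(L)}) = f(a). -/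
lemma cnt_comp_perm {L : ℕ} (σ : Equiv.Perm (Fin (L + 1))) (a : Fin (L + 1) → Fin 7) :
    cnt (a ∘ σ) = cnt a := by
  funext x
  unfold cnt
  apply Finset.card_bij (fun i _ => σ i)
  · intro i hi; simpa using (by simpa using hi : a (σ i) = x)
  · intro i _ j _ hij; exact σ.injective hij
  · intro j hj; exact ⟨σ.symm j, by simpa using (by simpa using hj : a j = x), by simp⟩

lemma cnt_sum01 {L : ℕ} (a : Fin (L + 1) → Fin 7) (h01 : ∀ i, a i = 0 ∨ a i = 1) :
    cnt a 0 + cnt a 1 = L + 1 := by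
  unfold cnt
  have he : (Finset.filter (fun i => a i = 1) Finset.univ) =
      Finset.filter (fun i => ¬ a i = 0) Finset.univ := by
    apply Finset.filter_congr
    intro i _
    rcases h01 i with hi | hi <;> simp [hi]
  rw [he, Finset.card_filter_add_card_filter_not (p := fun i => a i = 0)]
  simp

/-- `fEx` is `H`-symmetric for `H = diag(1,2,1,1,1,1,1)`. -/
theorem stmt14 {L : ℕ} (σ : Equiv.Perm (Fin (L + 1))) (a : Fin (L + 1) → Fin 7)
    (h : Tieless fun x : Fin 7 =>
      (if x = 1 then 2 else 1) * (cnt a x : ℤ)) :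
    fEx (a ∘ σ) = fEx a := by
  have hc : cnt (a ∘ σ) = cnt a := cnt_comp_perm σ a
  have hiff01 : (∀ i, (a ∘ σ) i = 0 ∨ (a ∘ σ) i = 1) ↔ (∀ i, a i = 0 ∨ a i = 1) :=
    ⟨fun H i => by simpa using H (σ.symm i), fun H i => H (σ i)⟩
  have hiffne : (∀ i, (a ∘ σ) i ≠ 0 ∧ (a ∘ σ) i ≠ 1) ↔ (∀ i, a i ≠ 0 ∧ a i ≠ 1) :=
    ⟨fun H i => by simpa using H (σ.symm i), fun H i => H (σ i)⟩
  unfold fEx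
  rw [hc]
  by_cases h01 : ∀ i, a i = 0 ∨ a i = 1
  · rw [if_pos (hiff01.mpr h01), if_pos h01]
    have hsum : cnt a 0 + cnt a 1 = L + 1 := cnt_sum01 a h01
    have hne3 : 3 * cnt a 1 ≠ L + 1 := by
      intro heq
      have h01' := h 0 1 (by decide)
      simp only [show ((0 : Fin 7) = 1) = False by simp, if_false, if_true,
        show ((1 : Fin 7) = 1) = True by simp] at h01'
      have hz : (1 : ℤ) * (cnt a 0 : ℤ) ≠ 0 := by
        push_cast; omega
      have := h01' hz
      push_cast at this
      omega
    rcases Nat.lt_trichotomy (3 * cnt a 1) (L + 1) with hlt | heq | hgt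
    · rw [if_pos hlt, if_pos hlt]
    · exact absurd heq hne3
    · rw [if_neg (show ¬ 3 * cnt a 1 < L + 1 by omega), if_pos hgt, if_neg (show ¬ 3 * cnt a 1 < L + 1 by omega), if_pos hgt]
  · rw [if_neg (fun H => h01 (hiff01.mp H)), if_neg h01]
    by_cases hne : ∀ i, a i ≠ 0 ∧ a i ≠ 1
    · rw [if_pos (hiffne.mpr hne), if_pos hne]
      have hcnt1 : cnt a 1 = 0 := by
        unfold cnt
        rw [Finset.card_eq_zero, Finset.filter_eq_empty_iff]
        intro i _
        exact (hne i).2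
      obtain ⟨x, -, hx⟩ := Finset.exists_max_image (Finset.univ : Finset (Fin 7))
        (cnt a) ⟨a 0, Finset.mem_univ _⟩
      have hxpos : 0 < cnt a x := by
        have : 0 < cnt a (a 0) := by
          unfold cnt
          rw [Finset.card_pos]
          exact ⟨0, by simp⟩
        exact lt_of_lt_of_le this (hx _ (Finset.mem_univ _))
      have hx1 : x ≠ 1 := by
        intro hx1; rw [hx1, hcnt1] at hxpos; omega
      have hex : ∃ x : Fin 7, ∀ y : Fin 7, y ≠ x → cnt a y < cnt a x := by
        refine ⟨x, fun y hy => ?_⟩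
        by_cases hy1 : y = 1
        · rw [hy1, hcnt1]; exact hxpos
        · have hle : cnt a y ≤ cnt a x := hx y (Finset.mem_univ _)
          have hnex := h x y (fun hh => hy hh.symm) (by
            simp only [if_neg hx1, one_mul]
            exact_mod_cast hxpos.ne')
          simp only [if_neg hx1, if_neg hy1, one_mul] at hnex
          exact lt_of_le_of_ne hle (fun hh => hnex (by exact_mod_cast hh.symm))
      rw [dif_pos hex, dif_pos hex]
    · rw [if_neg (fun H => hne (hiffne.mp H)), if_neg hne]
end
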